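/- Let α > −2 and β > −1. For integers 0 ≤ m ≤ n, define S_{m,1}^n(t,θ) := P_{n−m}^{(α+2m+1, β)}(1−2t) t^m cos(mθ) and S_{m,2}^n(t,θ) := P_{n−m}^{(α+2m+1, β)}(1−2t) t^m sin(mθ). Then for any two triples (n,m,ℓ) ≠ (n',m',ℓ') with 0 ≤ m ≤ n, 0 ≤ m' ≤ n', ℓ, ℓ' ∈ {1,2}, one has ∫_0^1 ∫_0^{2π} S_{m,ℓ}^n(t,θ) S_{m',ℓ'}^{n'}(t,θ) t^{α+1} (1−t)^β dθ dt = 0, and this integral is strictly positive when (n,m,ℓ) = (n',m',ℓ'), except for the identically zero functions S_{0,2}^n. -/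
import Mathlib


open MeasureTheory Real

noncomputable section

/-- `p` is a Jacobi polynomial of degree `n` with parameters `(a, b)`: it has degree `n`
and is orthogonal to all lower degrees with respect to `(1−t)^a (1+t)^b` on `(−1,1)`. -/
def IsJacobi (a b : ℝ) (n : ℕ) (p : Polynomial ℝ) : Prop :=
  p.degree = n ∧ ∀ k < n,
    ∫ t in Set.Ioo (-1 : ℝ) 1, p.eval t * t ^ k * (1 - t) ^ a * (1 + t) ^ b = 0

/-- The functions `S_{m,ℓ}^n` on the surface of the cone in `ℝ³`, in the coordinates
`(x,y,t) = (t cos θ, t sin θ, t)`: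
`S_{m,1}^n = P_{n−m}^{(α+2m+1,β)}(1−2t) t^m cos(mθ)` and
`S_{m,2}^n = P_{n−m}^{(α+2m+1,β)}(1−2t) t^m sin(mθ)`. -/
def coneSurfFun (J : ℕ → ℝ → ℝ → Polynomial ℝ) (α β : ℝ) (n m ℓ : ℕ) (t θ : ℝ) : ℝ :=
  (J (n - m) (α + 2 * m + 1) β).eval (1 - 2 * t) * t ^ m *
    (if ℓ = 1 then Real.cos (m * θ) else Real.sin (m * θ))

/-- Integrability of polynomial times Jacobi weight on `(-1,1)`. -/
lemma weight_integrableOn (a b : ℝ) (ha : -1 < a) (hb : -1 < b) (q : Polynomial ℝ) :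
    IntegrableOn (fun s => q.eval s * (1 - s) ^ a * (1 + s) ^ b) (Set.Ioo (-1 : ℝ) 1) := by
  have h1 : IntervalIntegrable (fun s => q.eval s * (1 - s) ^ a * (1 + s) ^ b)
      volume (-1) 0 := by
    have hb1 : IntervalIntegrable (fun s : ℝ => (1 + s) ^ b) volume (-1) 0 := by
      have := (intervalIntegral.intervalIntegrable_rpow' hb (a := 0) (b := 1)).comp_add_right 1
      simpa [add_comm] using this
    have hcont : ContinuousOn (fun s : ℝ => q.eval s * (1 - s) ^ a)
        (Set.uIcc (-1 : ℝ) 0) := by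
      apply (q.continuous_aeval.continuousOn).mul
      apply ContinuousOn.rpow_const (by fun_prop)
      intro x hx
      rw [Set.uIcc_of_le (by norm_num : (-1:ℝ) ≤ 0)] at hx
      left
      have : x ≤ 0 := hx.2
      nlinarith
    exact hb1.continuousOn_mul hcont
  have h2 : IntervalIntegrable (fun s => q.eval s * (1 - s) ^ a * (1 + s) ^ b)
      volume 0 1 := by
    have key : (fun s : ℝ => q.eval s * (1 - s) ^ a * (1 + s) ^ b)
        = fun s : ℝ => q.eval s * (1 + s) ^ b * (1 - s) ^ a := by
      funext s; ring
    rw [key]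
    have ha1 : IntervalIntegrable (fun s : ℝ => (1 - s) ^ a) volume 0 1 := by
      have := (intervalIntegral.intervalIntegrable_rpow' ha (a := 0) (b := 1)).comp_sub_left 1
      simpa using this.symm
    have hcont : ContinuousOn (fun s : ℝ => q.eval s * (1 + s) ^ b)
        (Set.uIcc (0 : ℝ) 1) := by
      apply (q.continuous_aeval.continuousOn).mul
      apply ContinuousOn.rpow_const (by fun_prop)
      intro x hx
      rw [Set.uIcc_of_le (by norm_num : (0:ℝ) ≤ 1)] at hx
      left
      have : 0 ≤ x := hx.1
      nlinarith
    exact ha1.continuousOn_mul hcont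
  have i1 := (intervalIntegrable_iff_integrableOn_Ioc_of_le (by norm_num : (-1:ℝ) ≤ 0)).mp h1
  have i2 := (intervalIntegrable_iff_integrableOn_Ioc_of_le (by norm_num : (0:ℝ) ≤ 1)).mp h2
  apply (i1.union i2).mono_set
  intro x hx
  rcases le_or_gt x 0 with h | h
  · exact Set.mem_union_left _ ⟨hx.1, h⟩
  · exact Set.mem_union_right _ ⟨h, le_of_lt hx.2⟩

/-- A polynomial orthogonal to all monomials of degree `< j` is orthogonal to any
polynomial of degree `< j`. -/
lemma jacobi_orth_poly (a b : ℝ) (ha : -1 < a) (hb : -1 < b) (j : ℕ) (p q : Polynomial ℝ)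
    (hp : ∀ k < j, ∫ t in Set.Ioo (-1:ℝ) 1,
      p.eval t * t ^ k * (1 - t) ^ a * (1 + t) ^ b = 0)
    (hq : q.degree < (j : WithBot ℕ)) :
    ∫ s in Set.Ioo (-1:ℝ) 1, p.eval s * q.eval s * (1 - s) ^ a * (1 + s) ^ b = 0 := by
  by_cases hq0 : q = 0
  · simp [hq0]
  have hqd : q.natDegree < j := by
    exact (Polynomial.natDegree_lt_iff_degree_lt hq0).mpr hq
  have hrw : (fun s : ℝ => p.eval s * q.eval s * (1 - s) ^ a * (1 + s) ^ b)
      = fun s => ∑ i ∈ Finset.range (q.natDegree + 1),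
          q.coeff i * (p.eval s * s ^ i * (1 - s) ^ a * (1 + s) ^ b) := by
    funext s
    rw [show q.eval s = ∑ i ∈ Finset.range (q.natDegree + 1), q.coeff i * s ^ i from
      Polynomial.eval_eq_sum_range s, Finset.mul_sum, Finset.sum_mul, Finset.sum_mul]
    exact Finset.sum_congr rfl fun i _ => by ring
  rw [hrw, integral_finset_sum]
  · apply Finset.sum_eq_zero
    intro i hi
    have hij : i < j := lt_of_le_of_lt (Finset.mem_range_succ_iff.mp hi) hqd
    rw [integral_const_mul, hp i hij, mul_zero]
  · intro i _
    have heq : (fun s : ℝ => q.coeff i * (p.eval s * s ^ i * (1 - s) ^ a * (1 + s) ^ b))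
        = fun s => (Polynomial.C (q.coeff i) * p * Polynomial.X ^ i).eval s
            * (1 - s) ^ a * (1 + s) ^ b := by
      funext s
      simp only [Polynomial.eval_mul, Polynomial.eval_C, Polynomial.eval_pow,
        Polynomial.eval_X]
      ring
    rw [heq]
    exact (weight_integrableOn a b ha hb _).integrable

/-- Positivity of the square integral. -/
lemma jacobi_sq_pos (a b : ℝ) (ha : -1 < a) (hb : -1 < b) (p : Polynomial ℝ) (hp : p ≠ 0) :
    0 < ∫ s in Set.Ioo (-1:ℝ) 1, p.eval s * p.eval s * (1 - s) ^ a * (1 + s) ^ b := by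
  set f : ℝ → ℝ := fun s => p.eval s * p.eval s * (1 - s) ^ a * (1 + s) ^ b with hf
  have hnonneg : 0 ≤ᵐ[volume.restrict (Set.Ioo (-1:ℝ) 1)] f := by
    filter_upwards [ae_restrict_mem measurableSet_Ioo] with s hs
    have h1 : (0:ℝ) ≤ 1 - s := by linarith [hs.2]
    have h2 : (0:ℝ) ≤ 1 + s := by linarith [hs.1]
    have := mul_self_nonneg (p.eval s)
    positivity
  have hfi : IntegrableOn f (Set.Ioo (-1:ℝ) 1) := by
    have heq : f = fun s => (p * p).eval s * (1 - s) ^ a * (1 + s) ^ b := by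
      funext s; simp [hf, Polynomial.eval_mul]
    rw [heq]
    exact weight_integrableOn a b ha hb _
  rw [MeasureTheory.setIntegral_pos_iff_support_of_nonneg_ae hnonneg hfi]
  have hsub : Set.Ioo (-1:ℝ) 1 \ {x | p.IsRoot x}
      ⊆ Function.support f ∩ Set.Ioo (-1:ℝ) 1 := by
    intro x hx
    refine ⟨?_, hx.1⟩
    have h1 : (0:ℝ) < 1 - x := by linarith [hx.1.2]
    have h2 : (0:ℝ) < 1 + x := by linarith [hx.1.1]
    have h3 : p.eval x ≠ 0 := hx.2
    have : f x ≠ 0 := by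
      simp only [hf]
      positivity
    exact this
  calc (0:ENNReal) < volume (Set.Ioo (-1:ℝ) 1 \ {x | p.IsRoot x}) := by
        rw [measure_diff_null ((Polynomial.finite_setOf_isRoot hp).measure_zero _)]
        rw [Real.volume_Ioo]
        norm_num
    _ ≤ _ := measure_mono hsub

lemma jacobi_mutually_orth (a b : ℝ) (ha : -1 < a) (hb : -1 < b)
    (j k : ℕ) (p q : Polynomial ℝ)
    (hpd : p.degree = (j : WithBot ℕ)) (hqd : q.degree = (k : WithBot ℕ))
    (hp : ∀ i < j, ∫ t in Set.Ioo (-1:ℝ) 1,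
      p.eval t * t ^ i * (1 - t) ^ a * (1 + t) ^ b = 0)
    (hq : ∀ i < k, ∫ t in Set.Ioo (-1:ℝ) 1,
      q.eval t * t ^ i * (1 - t) ^ a * (1 + t) ^ b = 0)
    (hjk : j ≠ k) :
    ∫ s in Set.Ioo (-1:ℝ) 1, p.eval s * q.eval s * (1 - s) ^ a * (1 + s) ^ b = 0 := by
  rcases hjk.lt_or_gt with h | h
  · have hcomm : (fun s : ℝ => p.eval s * q.eval s * (1 - s) ^ a * (1 + s) ^ b)
        = fun s => q.eval s * p.eval s * (1 - s) ^ a * (1 + s) ^ b := by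
      funext s; ring
    rw [hcomm]
    exact jacobi_orth_poly a b ha hb k q p hq (by rw [hpd]; exact_mod_cast h)
  · exact jacobi_orth_poly a b ha hb j p q hp (by rw [hqd]; exact_mod_cast h)

lemma integral_cos_int (k : ℤ) :
    ∫ θ in (0:ℝ)..(2*π), Real.cos (k * θ) = if k = 0 then 2*π else 0 := by
  rcases eq_or_ne k 0 with hk | hk
  · simp [hk]
  · rw [if_neg hk]
    have hk' : (k:ℝ) ≠ 0 := Int.cast_ne_zero.mpr hk
    rw [intervalIntegral.integral_comp_mul_left (fun x => Real.cos x) hk']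
    rw [integral_cos]
    have h1 : (k:ℝ) * (2*π) = (2*k : ℤ) * π := by push_cast; ring
    rw [h1, Real.sin_int_mul_pi]
    simp

lemma integral_sin_int (k : ℤ) :
    ∫ θ in (0:ℝ)..(2*π), Real.sin (k * θ) = 0 := by
  rcases eq_or_ne k 0 with hk | hk
  · simp [hk]
  · have hk' : (k:ℝ) ≠ 0 := Int.cast_ne_zero.mpr hk
    rw [intervalIntegral.integral_comp_mul_left (fun x => Real.sin x) hk']
    rw [integral_sin]
    rw [Real.cos_int_mul_two_pi]
    simp

lemma intInt_cos (c : ℝ) : IntervalIntegrable (fun θ : ℝ => Real.cos (c * θ))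
    volume 0 (2*π) :=
  (Real.continuous_cos.comp (continuous_const.mul continuous_id)).intervalIntegrable _ _

lemma intInt_sin (c : ℝ) : IntervalIntegrable (fun θ : ℝ => Real.sin (c * θ))
    volume 0 (2*π) :=
  (Real.continuous_sin.comp (continuous_const.mul continuous_id)).intervalIntegrable _ _

lemma integral_cos_cos (m m' : ℕ) :
    ∫ θ in (0:ℝ)..(2*π), Real.cos (m * θ) * Real.cos (m' * θ)
      = if m = m' then (if m = 0 then 2*π else π) else 0 := by
  have key : (fun θ : ℝ => Real.cos (m * θ) * Real.cos (m' * θ))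
      = fun θ => (Real.cos ((((m:ℤ) - m' : ℤ):ℝ) * θ) + Real.cos ((((m:ℤ) + m' : ℤ):ℝ) * θ)) / 2 := by
    funext θ
    have e1 : (((m:ℤ) - m' : ℤ):ℝ) * θ = (m:ℝ) * θ - (m':ℝ) * θ := by push_cast; ring
    have e2 : (((m:ℤ) + m' : ℤ):ℝ) * θ = (m:ℝ) * θ + (m':ℝ) * θ := by push_cast; ring
    rw [e1, e2, Real.cos_sub, Real.cos_add]
    ring
  rw [key, intervalIntegral.integral_div,
    intervalIntegral.integral_add (intInt_cos _) (intInt_cos _),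
    integral_cos_int, integral_cos_int]
  rcases eq_or_ne m m' with h | h
  · subst h
    rcases eq_or_ne m 0 with h0 | h0
    · rw [if_pos (by omega : (m:ℤ) - m = 0), if_pos (by omega : (m:ℤ) + m = 0),
        if_pos rfl, if_pos h0]
      ring
    · rw [if_pos (by omega : (m:ℤ) - m = 0), if_neg (by omega : ¬((m:ℤ) + m = 0)),
        if_pos rfl, if_neg h0]
      ring
  · rw [if_neg (by omega : ¬((m:ℤ) - m' = 0)), if_neg (by omega : ¬((m:ℤ) + m' = 0)),
      if_neg h]
    ring

lemma integral_sin_sin (m m' : ℕ) :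
    ∫ θ in (0:ℝ)..(2*π), Real.sin (m * θ) * Real.sin (m' * θ)
      = if m = m' then (if m = 0 then 0 else π) else 0 := by
  have key : (fun θ : ℝ => Real.sin (m * θ) * Real.sin (m' * θ))
      = fun θ => (Real.cos ((((m:ℤ) - m' : ℤ):ℝ) * θ) - Real.cos ((((m:ℤ) + m' : ℤ):ℝ) * θ)) / 2 := by
    funext θ
    have e1 : (((m:ℤ) - m' : ℤ):ℝ) * θ = (m:ℝ) * θ - (m':ℝ) * θ := by push_cast; ring
    have e2 : (((m:ℤ) + m' : ℤ):ℝ) * θ = (m:ℝ) * θ + (m':ℝ) * θ := by push_cast; ring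
    rw [e1, e2, Real.cos_sub, Real.cos_add]
    ring
  rw [key, intervalIntegral.integral_div,
    intervalIntegral.integral_sub (intInt_cos _) (intInt_cos _),
    integral_cos_int, integral_cos_int]
  rcases eq_or_ne m m' with h | h
  · subst h
    rcases eq_or_ne m 0 with h0 | h0
    · rw [if_pos (by omega : (m:ℤ) - m = 0), if_pos (by omega : (m:ℤ) + m = 0),
        if_pos rfl, if_pos h0]
      ring
    · rw [if_pos (by omega : (m:ℤ) - m = 0), if_neg (by omega : ¬((m:ℤ) + m = 0)),
        if_pos rfl, if_neg h0]
      ring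
  · rw [if_neg (by omega : ¬((m:ℤ) - m' = 0)), if_neg (by omega : ¬((m:ℤ) + m' = 0)),
      if_neg h]
    ring

lemma integral_sin_cos (m m' : ℕ) :
    ∫ θ in (0:ℝ)..(2*π), Real.sin (m * θ) * Real.cos (m' * θ) = 0 := by
  have key : (fun θ : ℝ => Real.sin (m * θ) * Real.cos (m' * θ))
      = fun θ => (Real.sin ((((m:ℤ) + m' : ℤ):ℝ) * θ) + Real.sin ((((m:ℤ) - m' : ℤ):ℝ) * θ)) / 2 := by
    funext θ
    have e1 : (((m:ℤ) - m' : ℤ):ℝ) * θ = (m:ℝ) * θ - (m':ℝ) * θ := by push_cast; ring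
    have e2 : (((m:ℤ) + m' : ℤ):ℝ) * θ = (m:ℝ) * θ + (m':ℝ) * θ := by push_cast; ring
    rw [e1, e2, Real.sin_sub, Real.sin_add]
    ring
  rw [key, intervalIntegral.integral_div,
    intervalIntegral.integral_add (intInt_sin _) (intInt_sin _),
    integral_sin_int, integral_sin_int]
  norm_num

lemma integral_cos_sin (m m' : ℕ) :
    ∫ θ in (0:ℝ)..(2*π), Real.cos (m * θ) * Real.sin (m' * θ) = 0 := by
  have key : (fun θ : ℝ => Real.cos (m * θ) * Real.sin (m' * θ))
      = fun θ => (Real.sin ((((m:ℤ) + m' : ℤ):ℝ) * θ) - Real.sin ((((m:ℤ) - m' : ℤ):ℝ) * θ)) / 2 := by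
    funext θ
    have e1 : (((m:ℤ) - m' : ℤ):ℝ) * θ = (m:ℝ) * θ - (m':ℝ) * θ := by push_cast; ring
    have e2 : (((m:ℤ) + m' : ℤ):ℝ) * θ = (m:ℝ) * θ + (m':ℝ) * θ := by push_cast; ring
    rw [e1, e2, Real.sin_sub, Real.sin_add]
    ring
  rw [key, intervalIntegral.integral_div,
    intervalIntegral.integral_sub (intInt_sin _) (intInt_sin _),
    integral_sin_int, integral_sin_int]
  norm_num

lemma t_integral_eq (α β : ℝ) (m : ℕ) (P Q : Polynomial ℝ) :
    ∫ t in Set.Ioo (0:ℝ) 1,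
        (P.eval (1 - 2*t) * t^m * (Q.eval (1 - 2*t) * t^m)) * (t ^ (α+1) * (1-t) ^ β)
      = ((1/2) * ((1/2 : ℝ) ^ (α+2*m+1) * (1/2 : ℝ) ^ β)) *
        ∫ s in Set.Ioo (-1:ℝ) 1,
          P.eval s * Q.eval s * (1-s) ^ (α+2*(m:ℝ)+1) * (1+s) ^ β := by
  set a : ℝ := α + 2*m + 1 with ha
  set G : ℝ → ℝ := fun s => P.eval s * Q.eval s * ((1-s)/2) ^ a * ((1+s)/2) ^ β with hG
  have step1 : ∫ t in Set.Ioo (0:ℝ) 1,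
      (P.eval (1 - 2*t) * t^m * (Q.eval (1 - 2*t) * t^m)) * (t ^ (α+1) * (1-t) ^ β)
      = ∫ t in Set.Ioo (0:ℝ) 1, G (1 - 2*t) := by
    apply setIntegral_congr_fun measurableSet_Ioo
    intro t ht
    simp only [hG]
    have e1 : (1 - (1 - 2*t))/2 = t := by ring
    have e2 : (1 + (1 - 2*t))/2 = 1 - t := by ring
    rw [e1, e2]
    have hpow : (t:ℝ)^m * t^m * t^(α+1) = t ^ a := by
      rw [← Real.rpow_natCast t m, ← Real.rpow_add ht.1, ← Real.rpow_add ht.1, ha]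
      congr 1
      ring
    calc P.eval (1 - 2*t) * t^m * (Q.eval (1 - 2*t) * t^m) * (t ^ (α+1) * (1-t) ^ β)
        = P.eval (1 - 2*t) * Q.eval (1 - 2*t) * (t^m * t^m * t^(α+1)) * (1-t)^β := by ring
      _ = P.eval (1 - 2*t) * Q.eval (1 - 2*t) * t ^ a * (1-t)^β := by rw [hpow]
  have step2 : ∫ t in Set.Ioo (0:ℝ) 1, G (1 - 2*t)
      = (2:ℝ)⁻¹ * ∫ s in Set.Ioo (-1:ℝ) 1, G s := by
    rw [← integral_Ioc_eq_integral_Ioo,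
      ← intervalIntegral.integral_of_le (by norm_num : (0:ℝ) ≤ 1)]
    rw [intervalIntegral.integral_comp_sub_mul G two_ne_zero 1]
    norm_num
    rw [intervalIntegral.integral_of_le (by norm_num : (-1:ℝ) ≤ 1),
      integral_Ioc_eq_integral_Ioo]
  have step3 : ∫ s in Set.Ioo (-1:ℝ) 1, G s
      = ((1/2 : ℝ) ^ a * (1/2 : ℝ) ^ β) *
        ∫ s in Set.Ioo (-1:ℝ) 1, P.eval s * Q.eval s * (1-s) ^ a * (1+s) ^ β := by
    rw [← integral_const_mul]
    apply setIntegral_congr_fun measurableSet_Ioo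
    intro s hs
    simp only [hG]
    have h1 : (0:ℝ) ≤ 1 - s := by linarith [hs.2]
    have h2 : (0:ℝ) ≤ 1 + s := by linarith [hs.1]
    have e1 : ((1-s)/2 : ℝ) ^ a = (1-s)^a * (1/2:ℝ)^a := by
      rw [show (1-s)/2 = (1-s) * (1/2) by ring, Real.mul_rpow h1 (by norm_num)]
    have e2 : ((1+s)/2 : ℝ) ^ β = (1+s)^β * (1/2:ℝ)^β := by
      rw [show (1+s)/2 = (1+s) * (1/2) by ring, Real.mul_rpow h2 (by norm_num)]
    rw [e1, e2]
    ring
  rw [step1, step2, step3]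
  ring

lemma theta_integral (J : ℕ → ℝ → ℝ → Polynomial ℝ) (α β : ℝ) (n m ℓ n' m' ℓ' : ℕ)
    (hℓ : ℓ = 1 ∨ ℓ = 2) (hℓ' : ℓ' = 1 ∨ ℓ' = 2) (t : ℝ) :
    (∫ θ in Set.Ioo (0:ℝ) (2*π), coneSurfFun J α β n m ℓ t θ * coneSurfFun J α β n' m' ℓ' t θ)
      = ((J (n-m) (α+2*m+1) β).eval (1-2*t) * t^m *
         ((J (n'-m') (α+2*m'+1) β).eval (1-2*t) * t^m')) *
        (if m = m' ∧ ℓ = ℓ' then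
           (if ℓ = 1 then (if m = 0 then 2*π else π) else (if m = 0 then 0 else π))
         else 0) := by
  have h2π : (0:ℝ) ≤ 2*π := by positivity
  rw [← integral_Ioc_eq_integral_Ioo, ← intervalIntegral.integral_of_le h2π]
  have hfun : (fun θ : ℝ => coneSurfFun J α β n m ℓ t θ * coneSurfFun J α β n' m' ℓ' t θ)
      = fun θ => ((J (n-m) (α+2*m+1) β).eval (1-2*t) * t^m *
          ((J (n'-m') (α+2*m'+1) β).eval (1-2*t) * t^m')) *
        ((if ℓ = 1 then Real.cos (m*θ) else Real.sin (m*θ)) *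
         (if ℓ' = 1 then Real.cos (m'*θ) else Real.sin (m'*θ))) := by
    funext θ
    simp only [coneSurfFun]
    ring
  rw [hfun, intervalIntegral.integral_const_mul]
  congr 1
  rcases hℓ with h1 | h1 <;> rcases hℓ' with h2 | h2 <;> subst h1 <;> subst h2 <;>
    norm_num [integral_cos_cos, integral_cos_sin, integral_sin_cos, integral_sin_sin]

/-- For `α > −2`, `β > −1`, the functions `S_{m,ℓ}^n` are mutually
orthogonal on the surface of the cone in `ℝ³` with respect to `t^{α+1} (1−t)^β dθ dt`,
with strictly positive norms except for the identically zero functions `S_{0,2}^n`. -/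
theorem cone_surface_orthogonality_dim3
    (α β : ℝ) (hα : -2 < α) (hβ : -1 < β)
    (J : ℕ → ℝ → ℝ → Polynomial ℝ)
    (hJ : ∀ (j : ℕ) (a b : ℝ), -1 < a → -1 < b → IsJacobi a b j (J j a b)) :
    ∀ n m ℓ n' m' ℓ' : ℕ, m ≤ n → m' ≤ n' → (ℓ = 1 ∨ ℓ = 2) → (ℓ' = 1 ∨ ℓ' = 2) →
      (((n, m, ℓ) ≠ (n', m', ℓ')) →
        ∫ t in Set.Ioo (0 : ℝ) 1,
          (∫ θ in Set.Ioo (0 : ℝ) (2 * π),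
            coneSurfFun J α β n m ℓ t θ * coneSurfFun J α β n' m' ℓ' t θ) *
          (t ^ (α + 1) * (1 - t) ^ β) = 0) ∧
      (¬(m = 0 ∧ ℓ = 2) →
        0 < ∫ t in Set.Ioo (0 : ℝ) 1,
          (∫ θ in Set.Ioo (0 : ℝ) (2 * π),
            coneSurfFun J α β n m ℓ t θ * coneSurfFun J α β n m ℓ t θ) *
          (t ^ (α + 1) * (1 - t) ^ β)) := by
  intro n m ℓ n' m' ℓ' hmn hmn' hℓ hℓ'
  have hcast : (0:ℝ) ≤ (m:ℝ) := Nat.cast_nonneg m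
  have haJ : (-1:ℝ) < α + 2*(m:ℝ) + 1 := by linarith
  constructor
  · intro hne
    by_cases hmm : m = m' ∧ ℓ = ℓ'
    · obtain ⟨hm, hl⟩ := hmm
      subst hm; subst hl
      have hnn : n ≠ n' := fun hc => hne (by rw [hc])
      set P : Polynomial ℝ := J (n - m) (α + 2*m + 1) β with hP
      set Q : Polynomial ℝ := J (n' - m) (α + 2*m + 1) β with hQ
      set T : ℝ := (if ℓ = 1 then (if m = 0 then 2*π else π)
        else (if m = 0 then 0 else π)) with hT
      have hin : ∀ t : ℝ, (∫ θ in Set.Ioo (0:ℝ) (2*π),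
            coneSurfFun J α β n m ℓ t θ * coneSurfFun J α β n' m ℓ t θ)
          = (P.eval (1-2*t) * t^m * (Q.eval (1-2*t) * t^m)) * T := by
        intro t
        rw [theta_integral J α β n m ℓ n' m ℓ hℓ hℓ t,
          if_pos (⟨rfl, rfl⟩ : m = m ∧ ℓ = ℓ)]
      simp only [hin]
      have step : ∫ t in Set.Ioo (0:ℝ) 1,
            ((P.eval (1-2*t) * t^m * (Q.eval (1-2*t) * t^m)) * T) * (t^(α+1) * (1-t)^β)
          = T * ∫ t in Set.Ioo (0:ℝ) 1,
            (P.eval (1-2*t) * t^m * (Q.eval (1-2*t) * t^m)) * (t^(α+1) * (1-t)^β) := by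
        rw [← integral_const_mul]
        apply setIntegral_congr_fun measurableSet_Ioo
        intro t _
        ring
      rw [step, t_integral_eq α β m P Q]
      have hPJ := hJ (n - m) (α + 2*(m:ℝ) + 1) β haJ hβ
      have hQJ := hJ (n' - m) (α + 2*(m:ℝ) + 1) β haJ hβ
      have horth : ∫ s in Set.Ioo (-1:ℝ) 1,
          P.eval s * Q.eval s * (1-s) ^ (α+2*(m:ℝ)+1) * (1+s) ^ β = 0 := by
        apply jacobi_mutually_orth (α+2*(m:ℝ)+1) β haJ hβ (n - m) (n' - m) P Q
          hPJ.1 hQJ.1 hPJ.2 hQJ.2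
        omega
      rw [horth]
      ring
    · have hin : ∀ t : ℝ, (∫ θ in Set.Ioo (0:ℝ) (2*π),
            coneSurfFun J α β n m ℓ t θ * coneSurfFun J α β n' m' ℓ' t θ) = 0 := by
        intro t
        rw [theta_integral J α β n m ℓ n' m' ℓ' hℓ hℓ' t, if_neg hmm, mul_zero]
      simp only [hin]
      simp
  · intro hne2
    set P : Polynomial ℝ := J (n - m) (α + 2*m + 1) β with hP
    set T : ℝ := (if ℓ = 1 then (if m = 0 then 2*π else π)
      else (if m = 0 then 0 else π)) with hT
    have hin : ∀ t : ℝ, (∫ θ in Set.Ioo (0:ℝ) (2*π),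
          coneSurfFun J α β n m ℓ t θ * coneSurfFun J α β n m ℓ t θ)
        = (P.eval (1-2*t) * t^m * (P.eval (1-2*t) * t^m)) * T := by
      intro t
      rw [theta_integral J α β n m ℓ n m ℓ hℓ hℓ t,
        if_pos (⟨rfl, rfl⟩ : m = m ∧ ℓ = ℓ)]
    simp only [hin]
    have step : ∫ t in Set.Ioo (0:ℝ) 1,
          ((P.eval (1-2*t) * t^m * (P.eval (1-2*t) * t^m)) * T) * (t^(α+1) * (1-t)^β)
        = T * ∫ t in Set.Ioo (0:ℝ) 1,
          (P.eval (1-2*t) * t^m * (P.eval (1-2*t) * t^m)) * (t^(α+1) * (1-t)^β) := by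
      rw [← integral_const_mul]
      apply setIntegral_congr_fun measurableSet_Ioo
      intro t _
      ring
    rw [step, t_integral_eq α β m P P]
    have hPJ := hJ (n - m) (α + 2*(m:ℝ) + 1) β haJ hβ
    have hP0 : P ≠ 0 := by
      intro hc
      have hdeg := hPJ.1
      rw [← hP, hc] at hdeg
      simp [Polynomial.degree_zero] at hdeg
    have hpos := jacobi_sq_pos (α+2*(m:ℝ)+1) β haJ hβ P hP0
    have hT0 : 0 < T := by
      rw [hT]
      rcases hℓ with h1 | h1 <;> subst h1
      · rcases eq_or_ne m 0 with h0 | h0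
        · rw [if_pos rfl, if_pos h0]; positivity
        · rw [if_pos rfl, if_neg h0]; exact Real.pi_pos
      · have hm0 : m ≠ 0 := fun hc => hne2 ⟨hc, rfl⟩
        rw [if_neg (by norm_num : ¬(2 = 1)), if_neg hm0]
        exact Real.pi_pos
    have hC : (0:ℝ) < (1/2) * ((1/2 : ℝ) ^ (α+2*(m:ℝ)+1) * (1/2 : ℝ) ^ β) := by
      have h1 := Real.rpow_pos_of_pos (by norm_num : (0:ℝ) < 1/2) (α+2*(m:ℝ)+1)
      have h2 := Real.rpow_pos_of_pos (by norm_num : (0:ℝ) < 1/2) β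
      positivity
    exact mul_pos hT0 (mul_pos hC hpos)
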